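/- Let $f_k(t) = t - \frac{2}{4-\gamma_k}\left(\frac{4-\gamma_k}{\gamma_k}\right)^{\gamma_k/2} t^{\gamma_k/2}$ with $\gamma_k \in (0,2)$, $\gamma_k \to 2$, and let $t_k = \frac{\gamma_k}{4-\gamma_k}$ be its unique global minimum point. Suppose $(\beta_k)$ is a sequence of positive reals with $\beta_k^2 \to \beta^2$ for some $\beta>0$ and $\lim_{k\to\infty} f_k(\beta_k^2)/f_k(t_k) = 1$. Then $\beta = 1$. -/

import Mathlib

/-!
Write `A = (4 - γ)/γ`. Since `f(t_k) = (γ - 2)/(4 - γ)` and `(A s)^{γ/2} = s e^u` with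
`u = (γ - 2) w`, `w = (γ/2) · log A/(γ - 2) + (log s)/2`, the ratio is
`f(s)/f(t_k) = s (-1 - 2 (e^u - 1)/(γ - 2))`. As `γ → 2`, `log A` vanishes with derivative `-1`,
so `w → -1 + (log β²)/2` and the ratio tends to `β² - β² log β²`. But `x - x log x < 1` for
every positive `x ≠ 1`, so the limit can only be `1` when `β² = 1`.
-/

open Filter Real Topology

theorem tendsto_sub_div_of_hasDerivAt {ι : Type*} {l : Filter ι} {g : ℝ → ℝ} {g' : ℝ}
    (hg : HasDerivAt g g' 0) {x v : ι → ℝ} {v₀ : ℝ} (hx : Tendsto x l (𝓝[≠] 0))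
    (hv : Tendsto v l (𝓝 v₀)) :
    Tendsto (fun i => (g (x i * v i) - g 0) / x i) l (𝓝 (v₀ * g')) := by
  have hxv : Tendsto (fun i => x i * v i) l (𝓝 0) := by
    simpa using (tendsto_nhds_of_tendsto_nhdsWithin hx).mul hv
  have hslope : Tendsto (fun i => dslope g 0 (x i * v i)) l (𝓝 g') := by
    rw [← hg.deriv, ← dslope_same]
    exact (continuousAt_dslope_same.mpr hg.differentiableAt).tendsto.comp hxv
  refine (hv.mul hslope).congr' ?_
  filter_upwards [hx self_mem_nhdsWithin] with i (hi : x i ≠ 0)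
  have := sub_smul_dslope g 0 (x i * v i)
  rw [sub_zero, smul_eq_mul] at this
  rw [← this, mul_assoc, mul_div_cancel_left₀ _ hi]

theorem rpow_eq_mul_exp_mul_log {t p : ℝ} (ht : 0 ≤ t) (hp : p ≠ 0) :
    t ^ p = t * exp ((p - 1) * log t) := by
  rcases ht.eq_or_lt with rfl | ht
  · simp [zero_rpow hp]
  · rw [rpow_def_of_pos ht]
    nth_rewrite 2 [← exp_log ht]
    rw [← exp_add]
    ring_nf

theorem eq_one_of_self_sub_mul_log_eq_one {x : ℝ} (hx : 0 < x) (h : x - x * log x = 1) :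
    x = 1 := by
  by_contra hne
  have hlog := log_lt_sub_one_of_pos (inv_pos.mpr hx) (inv_ne_one.mpr hne)
  rw [log_inv, lt_sub_iff_add_lt] at hlog
  have := mul_lt_mul_of_pos_left hlog hx
  rw [mul_add, mul_inv_cancel₀ hx.ne'] at this
  linarith

/-- The function `f_k` of the statement, with `γ = γ_k`. -/
noncomputable def profile (γ t : ℝ) : ℝ :=
  t - 2 / (4 - γ) * ((4 - γ) / γ) ^ (γ / 2) * t ^ (γ / 2)

noncomputable def logRatio (γ : ℝ) : ℝ := log ((4 - γ) / γ)

theorem hasDerivAt_logRatio_two : HasDerivAt logRatio (-1) 2 := by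
  have h := ((hasDerivAt_id' (2 : ℝ)).const_sub 4).div (hasDerivAt_id' (2 : ℝ)) two_ne_zero
  have := h.log (by norm_num)
  norm_num at this
  exact this

section

variable {γ : ℝ}

theorem profile_minValue (h0 : 0 < γ) (h4 : γ < 4) :
    profile γ (γ / (4 - γ)) = (γ - 2) / (4 - γ) := by
  have hA : 0 < (4 - γ) / γ := div_pos (by linarith) h0
  have hinv : γ / (4 - γ) = ((4 - γ) / γ)⁻¹ := (inv_div _ _).symm
  rw [profile, mul_assoc, hinv, inv_rpow hA.le, mul_inv_cancel₀ (rpow_pos_of_pos hA _).ne',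
    ← hinv]
  ring

theorem profile_div_profile_minValue (h0 : 0 < γ) (h2 : γ < 2) {t : ℝ} (ht : 0 ≤ t) :
    profile γ t / profile γ (γ / (4 - γ)) =
      t * (-1 - 2 * ((exp ((γ - 2) * (γ / 2 * dslope logRatio 2 γ + log t / 2)) - 1) /
        (γ - 2))) := by
  have hA : 0 < (4 - γ) / γ := div_pos (by linarith) h0
  have hφ : (γ - 2) * dslope logRatio 2 γ = log ((4 - γ) / γ) := by
    have := sub_smul_dslope logRatio 2 γ
    norm_num [logRatio] at this
    exact this
  have hexp : (γ - 2) * (γ / 2 * dslope logRatio 2 γ + log t / 2) =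
      γ / 2 * log ((4 - γ) / γ) + (γ / 2 - 1) * log t := by
    rw [← hφ]
    ring
  have hprofile : profile γ t = t - 2 / (4 - γ) * t * exp ((γ - 2) *
      (γ / 2 * dslope logRatio 2 γ + log t / 2)) := by
    rw [hexp, exp_add, profile, rpow_eq_mul_exp_mul_log ht (by positivity),
      rpow_def_of_pos hA]
    ring_nf
  rw [hprofile, profile_minValue h0 (by linarith)]
  field_simp [sub_ne_zero.mpr h2.ne, (by linarith : (4 - γ) ≠ 0)]
  ring

end

theorem stmt7_general (γ : ℕ → ℝ) (hγ : ∀ k, γ k ∈ Set.Ioo (0 : ℝ) 2)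
    (hγlim : Tendsto γ atTop (nhds 2))
    (f : ℕ → ℝ → ℝ)
    (hf : ∀ k t, f k t =
      t - 2 / (4 - γ k) * ((4 - γ k) / γ k) ^ (γ k / 2) * t ^ (γ k / 2))
    (β : ℝ) (hβ : 0 < β) (βseq : ℕ → ℝ)
    (hβlim : Tendsto (fun k => (βseq k) ^ 2) atTop (nhds (β ^ 2)))
    (hratio : Tendsto (fun k => f k ((βseq k) ^ 2) / f k (γ k / (4 - γ k)))
      atTop (nhds 1)) :
    β = 1 := by
  have hβ2 : 0 < β ^ 2 := by positivity
  have hx : Tendsto (fun k => γ k - 2) atTop (𝓝[≠] 0) :=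
    tendsto_nhdsWithin_of_tendsto_nhds_of_eventually_within _
      (by simpa using hγlim.sub_const 2)
      (Eventually.of_forall fun k => sub_ne_zero.mpr (hγ k).2.ne)
  have hslope : Tendsto (fun k => dslope logRatio 2 (γ k)) atTop (𝓝 (-1)) := by
    rw [← hasDerivAt_logRatio_two.deriv, ← dslope_same]
    exact (continuousAt_dslope_same.mpr
      hasDerivAt_logRatio_two.differentiableAt).tendsto.comp hγlim
  have hw : Tendsto (fun k => γ k / 2 * dslope logRatio 2 (γ k) + log (βseq k ^ 2) / 2)
      atTop (𝓝 (2 / 2 * -1 + log (β ^ 2) / 2)) :=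
    ((hγlim.div_const 2).mul hslope).add
      (((continuousAt_log hβ2.ne').tendsto.comp hβlim).div_const 2)
  have hlim := hβlim.mul
    (((tendsto_sub_div_of_hasDerivAt (hasDerivAt_exp 0) hx hw).const_mul 2).const_sub (-1))
  rw [exp_zero] at hlim
  have hlim' := hlim.congr fun k =>
    (profile_div_profile_minValue (hγ k).1 (hγ k).2 (sq_nonneg (βseq k))).symm
  obtain rfl : f = fun k => profile (γ k) := funext fun k => funext (hf k)
  have hβ2_eq : β ^ 2 = 1 := eq_one_of_self_sub_mul_log_eq_one hβ2 (by
    have := tendsto_nhds_unique hlim' hratio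
    linarith)
  exact (pow_eq_one_iff_of_nonneg hβ.le two_ne_zero).mp hβ2_eq

/-- if `β_k² → β²` with `β > 0` and `f_k(β_k²)/f_k(t_k) → 1`, where
`t_k = γ_k/(4-γ_k)` is the unique global minimum point of `f_k`, then `β = 1`. -/
theorem stmt7 (γ : ℕ → ℝ) (hγ : ∀ k, γ k ∈ Set.Ioo (0 : ℝ) 2)
    (hγlim : Tendsto γ atTop (nhds 2))
    (f : ℕ → ℝ → ℝ)
    (hf : ∀ k t, f k t =
      t - 2 / (4 - γ k) * ((4 - γ k) / γ k) ^ (γ k / 2) * t ^ (γ k / 2))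
    (β : ℝ) (hβ : 0 < β) (βseq : ℕ → ℝ) (hβseq : ∀ k, 0 < βseq k)
    (hβlim : Tendsto (fun k => (βseq k) ^ 2) atTop (nhds (β ^ 2)))
    (hratio : Tendsto (fun k => f k ((βseq k) ^ 2) / f k (γ k / (4 - γ k)))
      atTop (nhds 1)) :
    β = 1 :=
  stmt7_general γ hγ hγlim f hf β hβ βseq hβlim hratio
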